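/- arXiv:1711.05213 — 4 statements merged into one kernel-verified Lean document; each statement's English description precedes it below -/
import Mathlib

section
/- The number of primitive binary words of length m containing an odd number of ones equals (1/2)·Σ_{d | m, d odd} μ(d)·2^{m/d}. -/
/-- `m`-fold concatenation of the word `a`. -/
def wpow {α : Type*} (a : List α) (m : ℕ) : List α := (List.replicate m a).flatten

/-- A finite word is primitive if it is not a power `a^m` with `m > 1`. -/
def Primitive {α : Type*} (w : List α) : Prop := ¬ ∃ a m, 1 < m ∧ w = wpow a m

section WordAux

variable {α : Type*}

@[simp] lemma wpow_zero (a : List α) : wpow a 0 = [] := rfl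

lemma wpow_succ (a : List α) (m : ℕ) : wpow a (m + 1) = a ++ wpow a m := by
  simp [wpow, List.replicate_succ]

lemma wpow_one (a : List α) : wpow a 1 = a := by simp [wpow_succ]

lemma wpow_add (a : List α) (m n : ℕ) : wpow a (m + n) = wpow a m ++ wpow a n := by
  induction m with
  | zero => simp
  | succ m ih => rw [Nat.succ_add, wpow_succ, wpow_succ, ih, List.append_assoc]

@[simp] lemma length_wpow (a : List α) (m : ℕ) : (wpow a m).length = m * a.length := by
  induction m with
  | zero => simp
  | succ m ih => rw [wpow_succ, List.length_append, ih]; ring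

@[simp] lemma count_wpow [BEq α] (a : List α) (m : ℕ) (b : α) :
    (wpow a m).count b = m * a.count b := by
  induction m with
  | zero => simp
  | succ m ih => rw [wpow_succ, List.count_append, ih]; ring

lemma wpow_wpow (a : List α) (m n : ℕ) : wpow (wpow a m) n = wpow a (m * n) := by
  induction n with
  | zero => simp
  | succ n ih =>
    rw [wpow_succ, ih, Nat.mul_succ, Nat.add_comm, wpow_add]

lemma prefix_wpow (a : List α) {m : ℕ} (hm : 1 ≤ m) : a <+: wpow a m := by
  obtain ⟨k, rfl⟩ : ∃ k, m = k + 1 := ⟨m - 1, by omega⟩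
  rw [wpow_succ]
  exact List.prefix_append a _

lemma wpow_shift (u v : List α) (n : ℕ) :
    wpow (u ++ v) n ++ u = u ++ wpow (v ++ u) n := by
  induction n with
  | zero => simp
  | succ n ih =>
    rw [wpow_succ, wpow_succ]
    simp only [List.append_assoc, ih]

lemma comm_exists_aux : ∀ n (x y : List α), x.length + y.length ≤ n →
    x ++ y = y ++ x → ∃ z p q, x = wpow z p ∧ y = wpow z q := by
  intro n
  induction n with
  | zero =>
    intro x y h _
    have hx : x = [] := List.length_eq_zero_iff.mp (by omega)
    have hy : y = [] := List.length_eq_zero_iff.mp (by omega)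
    exact ⟨[], 0, 0, by simp [hx], by simp [hy]⟩
  | succ n ih =>
    intro x y hlen heq
    rcases eq_or_ne x [] with rfl | hx
    · exact ⟨y, 0, 1, rfl, (wpow_one y).symm⟩
    rcases eq_or_ne y [] with rfl | hy
    · exact ⟨x, 1, 0, (wpow_one x).symm, rfl⟩
    rcases le_total x.length y.length with hle | hle
    · have hpre : x <+: y :=
        List.prefix_of_prefix_length_le (heq ▸ List.prefix_append x y)
          (List.prefix_append y x) hle
      obtain ⟨t, rfl⟩ := hpre
      have heq' : x ++ t = t ++ x := by
        have h2 : x ++ (x ++ t) = x ++ (t ++ x) := by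
          rw [heq]; simp [List.append_assoc]
        exact List.append_cancel_left h2
      have hxlen : 1 ≤ x.length := by
        rcases Nat.eq_zero_or_pos x.length with h0 | h1
        · exact absurd (List.length_eq_zero_iff.mp h0) hx
        · exact h1
      have hlen' : x.length + t.length ≤ n := by
        simp only [List.length_append] at hlen; omega
      obtain ⟨z, p, q, hxz, htz⟩ := ih x t hlen' heq'
      exact ⟨z, p, p + q, hxz, by rw [wpow_add, hxz, htz]⟩
    · have hpre : y <+: x :=
        List.prefix_of_prefix_length_le (heq.symm ▸ List.prefix_append y x)
          (List.prefix_append x y) hle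
      obtain ⟨t, rfl⟩ := hpre
      have heq' : y ++ t = t ++ y := by
        have h2 : y ++ (y ++ t) = y ++ (t ++ y) := by
          rw [← heq]; simp [List.append_assoc]
        exact List.append_cancel_left h2
      have hylen : 1 ≤ y.length := by
        rcases Nat.eq_zero_or_pos y.length with h0 | h1
        · exact absurd (List.length_eq_zero_iff.mp h0) hy
        · exact h1
      have hlen' : y.length + t.length ≤ n := by
        simp only [List.length_append] at hlen; omega
      obtain ⟨z, p, q, hyz, htz⟩ := ih y t hlen' heq'
      exact ⟨z, p + q, p, by rw [wpow_add, hyz, htz], hyz⟩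

lemma comm_exists {x y : List α} (h : x ++ y = y ++ x) :
    ∃ z p q, x = wpow z p ∧ y = wpow z q :=
  comm_exists_aux (x.length + y.length) x y le_rfl h

/-- If `x^i = y^j` with `i, j ≥ 1` and `|x| ≤ |y|`, then `x` and `y` commute. -/
lemma pow_eq_pow_comm_aux {x y : List α} {i j : ℕ} (hi : 1 ≤ i) (hj : 1 ≤ j)
    (h : wpow x i = wpow y j) (hle : x.length ≤ y.length) : x ++ y = y ++ x := by
  rcases eq_or_ne x [] with rfl | hx
  · simp
  have hxu : x ++ wpow y j = wpow y j ++ x := by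
    rw [← h, ← wpow_succ, wpow_add x i 1, wpow_one]
  have hxy : x <+: y := by
    have hp1 : x <+: wpow y j ++ x := by
      rw [← hxu]; exact List.prefix_append x _
    exact List.prefix_of_prefix_length_le hp1
      ((prefix_wpow y hj).trans (List.prefix_append _ x)) hle
  obtain ⟨t, rfl⟩ := hxy
  have hpows : wpow (x ++ t) j = wpow (t ++ x) j :=
    List.append_cancel_left (hxu.trans (wpow_shift x t j))
  have hxt : x ++ t = t ++ x := by
    have h1 : x ++ t <+: wpow (x ++ t) j := prefix_wpow _ hj
    have h2 : t ++ x <+: wpow (x ++ t) j := hpows ▸ prefix_wpow _ hj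
    refine (List.prefix_of_prefix_length_le h1 h2 ?_).eq_of_length ?_ <;>
      simp [Nat.add_comm]
  obtain ⟨z, p, q, hxz, htz⟩ := comm_exists hxt
  subst hxz htz
  rw [← wpow_add, ← wpow_add, ← wpow_add]
  congr 1
  omega

lemma pow_eq_pow_comm {x y : List α} {i j : ℕ} (hi : 1 ≤ i) (hj : 1 ≤ j)
    (h : wpow x i = wpow y j) : x ++ y = y ++ x := by
  rcases le_total x.length y.length with hle | hle
  · exact pow_eq_pow_comm_aux hi hj h hle
  · exact (pow_eq_pow_comm_aux hj hi h.symm hle).symm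

lemma wpow_nil (m : ℕ) : wpow ([] : List α) m = [] := by
  apply List.length_eq_zero_iff.mp
  rw [length_wpow]
  simp

lemma not_primitive_nil : ¬ Primitive ([] : List α) := by
  intro h
  exact h ⟨[], 2, one_lt_two, (wpow_nil 2).symm⟩

lemma Primitive.ne_nil {w : List α} (h : Primitive w) : w ≠ [] := by
  rintro rfl; exact not_primitive_nil h

lemma primitive_eq_of_wpow {a z : List α} {p : ℕ} (ha : Primitive a)
    (hz : a = wpow z p) : a = z := by
  match p, hz with
  | 0, hz => exact absurd hz ha.ne_nil
  | 1, hz => rw [hz, wpow_one]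
  | (k + 2), hz => exact absurd ⟨z, k + 2, by omega, hz⟩ ha

lemma exists_proot_aux : ∀ n (w : List α), w.length ≤ n → w ≠ [] →
    ∃ a k, Primitive a ∧ 1 ≤ k ∧ w = wpow a k := by
  intro n
  induction n with
  | zero =>
    intro w h hw
    exact absurd (List.length_eq_zero_iff.mp (by omega)) hw
  | succ n ih =>
    intro w hlen hw
    by_cases hp : Primitive w
    · exact ⟨w, 1, hp, le_rfl, (wpow_one w).symm⟩
    · rw [Primitive, not_not] at hp
      obtain ⟨a, m, hm, heq⟩ := hp
      have ha : a ≠ [] := by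
        rintro rfl
        exact hw (heq.trans (wpow_nil m))
      have halen : 1 ≤ a.length := by
        rcases Nat.eq_zero_or_pos a.length with h0 | h1
        · exact absurd (List.length_eq_zero_iff.mp h0) ha
        · exact h1
      have hwlen : w.length = m * a.length := by rw [heq, length_wpow]
      have han : a.length ≤ n := by nlinarith
      obtain ⟨b, k, hb, hk, hab⟩ := ih a han ha
      refine ⟨b, k * m, hb, ?_, ?_⟩
      · have hm1 : 1 ≤ m := by omega
        exact Nat.one_le_iff_ne_zero.mpr (by positivity)
      · rw [heq, hab, wpow_wpow]

lemma exists_proot (w : List α) (hw : w ≠ []) :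
    ∃ a, ∃ k, Primitive a ∧ 1 ≤ k ∧ w = wpow a k := by
  obtain ⟨a, k, h1, h2, h3⟩ := exists_proot_aux w.length w le_rfl hw
  exact ⟨a, k, h1, h2, h3⟩

lemma proot_unique {a b : List α} {i j : ℕ} (ha : Primitive a) (hb : Primitive b)
    (hi : 1 ≤ i) (hj : 1 ≤ j) (h : wpow a i = wpow b j) : a = b := by
  obtain ⟨z, p, q, hx, hy⟩ := comm_exists (pow_eq_pow_comm hi hj h)
  rw [primitive_eq_of_wpow ha hx, primitive_eq_of_wpow hb hy]

lemma wpow_left_injective {a b : List α} {k : ℕ} (hk : 1 ≤ k)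
    (hl : a.length = b.length) (h : wpow a k = wpow b k) : a = b :=
  (List.prefix_of_prefix_length_le (prefix_wpow a hk) (h ▸ prefix_wpow b hk)
    hl.le).eq_of_length hl

end WordAux

attribute [local instance] Classical.propDecidable

noncomputable section Counting

open Finset

/-- All binary words of length `m`. -/
noncomputable def Wds (m : ℕ) : Finset (List Bool) :=
  (Finset.univ : Finset (List.Vector Bool m)).image (fun v : List.Vector Bool m => v.val)

lemma mem_Wds {m : ℕ} {w : List Bool} : w ∈ Wds m ↔ w.length = m := by
  constructor
  · intro h
    simp only [Wds, Finset.mem_image] at h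
    obtain ⟨v, _, rfl⟩ := h
    exact v.2
  · intro h
    simp only [Wds, Finset.mem_image]
    exact ⟨⟨w, h⟩, Finset.mem_univ _, rfl⟩

lemma card_Wds (m : ℕ) : (Wds m).card = 2 ^ m := by
  have h : (Wds m).card = (Finset.univ : Finset (List.Vector Bool m)).card := by
    apply Finset.card_image_of_injective
    exact fun a b hab => Subtype.ext hab
  rw [h, Finset.card_univ, card_vector, Fintype.card_bool]

/-- Words of length `m` with an odd number of ones. -/
noncomputable def oddW (m : ℕ) : Finset (List Bool) :=
  (Wds m).filter (fun w => Odd (w.count true))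

/-- Primitive words of length `m` with an odd number of ones. -/
noncomputable def pW (m : ℕ) : Finset (List Bool) :=
  (Wds m).filter (fun w => Primitive w ∧ Odd (w.count true))

noncomputable def Pcnt (m : ℕ) : ℕ := (pW m).card

lemma card_oddW (m : ℕ) (hm : 1 ≤ m) : (oddW m).card = 2 ^ (m - 1) := by
  rw [← card_Wds (m - 1)]
  refine Finset.card_bij' (fun w _ => w.tail)
    (fun v _ => (if Odd (v.count true) then false else true) :: v) ?_ ?_ ?_ ?_
  · intro w hw
    simp only [oddW, Finset.mem_filter, mem_Wds] at hw
    rw [mem_Wds, List.length_tail, hw.1]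
  · intro v hv
    rw [mem_Wds] at hv
    simp only [oddW, Finset.mem_filter, mem_Wds]
    constructor
    · rw [List.length_cons, hv]; omega
    · rcases Nat.even_or_odd (v.count true) with he | ho
      · have hno : ¬ Odd (v.count true) := by
          simp [Nat.odd_iff, Nat.even_iff] at he ⊢; omega
        simp only [hno, if_false, List.count_cons]
        simp only [Nat.odd_iff, Nat.even_iff] at he ⊢
        simp
        omega
      · simp only [ho, if_true, List.count_cons]
        simpa using ho
  · intro w hw
    simp only [oddW, Finset.mem_filter, mem_Wds] at hw
    obtain ⟨hlen, hodd⟩ := hw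
    have hne : w ≠ [] := by
      intro h; rw [h] at hlen; simp at hlen; omega
    obtain ⟨b, t, rfl⟩ := List.exists_cons_of_ne_nil hne
    simp only [List.tail_cons]
    congr 1
    rcases b with _ | _
    · have ht : Odd (t.count true) := by
        simpa [List.count_cons] using hodd
      simp [ht]
    · have ht : ¬ Odd (t.count true) := by
        simp only [List.count_cons] at hodd
        simp only [Nat.odd_iff] at hodd ⊢
        simp at hodd
        omega
      simp [ht]
  · intro v _
    simp

/-- A choice of primitive root. -/
noncomputable def proot (w : List Bool) : List Bool :=
  if h : w = [] then [] else (exists_proot w h).choose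

lemma proot_spec {w : List Bool} (h : w ≠ []) :
    ∃ k, Primitive (proot w) ∧ 1 ≤ k ∧ w = wpow (proot w) k := by
  rw [proot, dif_neg h]
  exact (exists_proot w h).choose_spec

lemma proot_eq {w a : List Bool} {k : ℕ} (hne : w ≠ []) (ha : Primitive a)
    (hk : 1 ≤ k) (hw : w = wpow a k) : proot w = a := by
  obtain ⟨k', hprim, hk', hw'⟩ := proot_spec hne
  exact proot_unique hprim ha hk' hk (hw'.symm.trans hw)

lemma sum_Pcnt (m : ℕ) (hm : 1 ≤ m) :
    2 ^ (m - 1) = ∑ d ∈ m.divisors.filter (fun d => Odd (m / d)), Pcnt d := by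
  rw [← card_oddW m hm]
  rw [Finset.card_eq_sum_card_fiberwise
    (f := fun w => (proot w).length)
    (t := m.divisors.filter (fun d => Odd (m / d))) ?_]
  · refine Finset.sum_congr rfl fun d hd => ?_
    simp only [Finset.mem_filter, Nat.mem_divisors] at hd
    obtain ⟨⟨hdvd, hm0⟩, hoddq⟩ := hd
    have hd1 : 1 ≤ d := by
      rcases Nat.eq_zero_or_pos d with h0 | h1
      · subst h0; simp only [Nat.zero_dvd] at hdvd; omega
      · exact h1
    have hq1 : 1 ≤ m / d := Nat.div_pos (Nat.le_of_dvd (by omega) hdvd) hd1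
    refine (Finset.card_bij (fun a _ => wpow a (m / d)) ?_ ?_ ?_).symm
    · intro a ha
      simp only [pW, Finset.mem_filter, mem_Wds] at ha
      obtain ⟨hlen, hprim, hodd⟩ := ha
      have hlenw : (wpow a (m / d)).length = m := by
        rw [length_wpow, hlen, Nat.div_mul_cancel hdvd]
      have hne : wpow a (m / d) ≠ [] := by
        intro h; rw [h] at hlenw; simp at hlenw; omega
      simp only [Finset.mem_filter, oddW, mem_Wds]
      refine ⟨⟨hlenw, ?_⟩, ?_⟩
      · rw [count_wpow]
        exact hoddq.mul hodd
      · rw [proot_eq hne hprim hq1 rfl, hlen]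
    · intro a ha b hb hab
      simp only [pW, Finset.mem_filter, mem_Wds] at ha hb
      exact wpow_left_injective hq1 (ha.1.trans hb.1.symm) hab
    · intro w hw
      simp only [Finset.mem_filter, oddW, mem_Wds] at hw
      obtain ⟨⟨hlen, hodd⟩, hroot⟩ := hw
      have hne : w ≠ [] := by
        intro h; rw [h] at hlen; simp at hlen; omega
      obtain ⟨k, hprim, hk, hw'⟩ := proot_spec hne
      have hmk : m = k * d := by
        conv_lhs => rw [← hlen, hw']
        rw [length_wpow, hroot]
      have hkq : k = m / d := by rw [hmk, Nat.mul_div_cancel _ (by omega)]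
      refine ⟨proot w, ?_, ?_⟩
      · simp only [pW, Finset.mem_filter, mem_Wds]
        refine ⟨hroot, hprim, ?_⟩
        rw [hw', count_wpow] at hodd
        exact (Nat.odd_mul.mp hodd).2
      · show wpow (proot w) (m / d) = w
        rw [← hkq]
        exact hw'.symm
  · intro w hw
    simp only [Finset.mem_coe, Finset.mem_filter, oddW, mem_Wds] at hw
    obtain ⟨hlen, hodd⟩ := hw
    have hne : w ≠ [] := by
      intro h; rw [h] at hlen; simp at hlen; omega
    obtain ⟨k, hprim, hk, hw'⟩ := proot_spec hne
    have hmk : m = k * (proot w).length := by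
      conv_lhs => rw [← hlen, hw']
      rw [length_wpow]
    have hrne : 1 ≤ (proot w).length := by
      rcases Nat.eq_zero_or_pos (proot w).length with h0 | h1
      · exact absurd (List.length_eq_zero_iff.mp h0) hprim.ne_nil
      · exact h1
    simp only [Finset.mem_coe, Finset.mem_filter, Nat.mem_divisors]
    refine ⟨⟨⟨k, by rw [hmk, Nat.mul_comm]⟩, by omega⟩, ?_⟩
    have hqk : m / (proot w).length = k := by
      rw [hmk, Nat.mul_div_cancel _ (by omega)]
    rw [hqk]
    rw [hw', count_wpow] at hodd
    exact (Nat.odd_mul.mp hodd).1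

end Counting

/-- The number of primitive binary words of length `m` with an odd number of ones equals
`(1/2) ∑_{d ∣ m, d odd} μ(d) 2^{m/d}`. -/
theorem stmt1 (m : ℕ) (hm : 1 ≤ m) :
    (Nat.card {w : List Bool // w.length = m ∧ Primitive w ∧ Odd (w.count true)} : ℚ) =
      (1 / 2 : ℚ) * ∑ d ∈ m.divisors.filter (fun d => Odd d),
        (ArithmeticFunction.moebius d : ℚ) * 2 ^ (m / d) := by
  have hcard : Nat.card {w : List Bool // w.length = m ∧ Primitive w ∧ Odd (w.count true)}
      = Pcnt m := by
    have hset : {w : List Bool | w.length = m ∧ Primitive w ∧ Odd (w.count true)}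
        = ↑(pW m) := by
      ext w
      simp only [Set.mem_setOf_eq, pW, Finset.coe_filter, Set.mem_setOf_eq, mem_Wds]
      try tauto
    rw [show {w : List Bool // w.length = m ∧ Primitive w ∧ Odd (w.count true)}
        = ↥{w : List Bool | w.length = m ∧ Primitive w ∧ Odd (w.count true)} from rfl,
      Nat.card_coe_set_eq, hset, Set.ncard_coe_finset]
    rfl
  rw [hcard]
  have hm0 : m ≠ 0 := by omega
  obtain ⟨K, n, hKpow, hKn, hKpos, hnodd⟩ :
      ∃ K n, (∃ k2, K = 2 ^ k2) ∧ K * n = m ∧ 0 < K ∧ Odd n := by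
    refine ⟨2 ^ m.factorization 2, m / 2 ^ m.factorization 2, ⟨m.factorization 2, rfl⟩,
      Nat.mul_div_cancel' (Nat.ordProj_dvd m 2), Nat.pow_pos (by norm_num), ?_⟩
    have h2 : ¬ 2 ∣ m / 2 ^ m.factorization 2 := Nat.not_dvd_ordCompl Nat.prime_two hm0
    exact Nat.odd_iff.mpr (Nat.two_dvd_ne_zero.mp h2)
  have hn0 : n ≠ 0 := by
    rintro rfl; rw [Nat.mul_zero] at hKn; omega
  have hcopK : ∀ q : ℕ, Odd q → Nat.Coprime K q := by
    intro q hq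
    obtain ⟨k2, rfl⟩ := hKpow
    exact Nat.Coprime.pow_left _ (Nat.coprime_two_left.mpr hq)
  have hnm : n ∣ m := ⟨K, by rw [← hKn, Nat.mul_comm]⟩
  -- the filtered divisors of m are exactly the divisors of n
  have hdivs : m.divisors.filter (fun d => Odd d) = n.divisors := by
    ext d
    simp only [Finset.mem_filter, Nat.mem_divisors]
    constructor
    · rintro ⟨⟨hdm, -⟩, hodd⟩
      refine ⟨?_, hn0⟩
      exact (Nat.Coprime.dvd_of_dvd_mul_left ((hcopK d hodd).symm) (hKn ▸ hdm))
    · rintro ⟨hdn, -⟩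
      exact ⟨⟨hdn.trans hnm, hm0⟩, hnodd.of_dvd_nat hdn⟩
  -- Möbius inversion input
  have key : ∀ e > 0, e ∈ {x | x ∣ n} →
      ∑ f ∈ e.divisors, (Pcnt (K * f) : ℚ) = (2 : ℚ) ^ (K * e - 1) := by
    intro e he hedvd
    have hodde : Odd e := hnodd.of_dvd_nat hedvd
    have hKe : 1 ≤ K * e := Nat.one_le_iff_ne_zero.mpr (by positivity)
    have hA := sum_Pcnt (K * e) hKe
    have himg : (K * e).divisors.filter (fun d => Odd (K * e / d))
        = e.divisors.image (fun f => K * f) := by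
      ext d
      simp only [Finset.mem_filter, Nat.mem_divisors, Finset.mem_image]
      constructor
      · rintro ⟨⟨hdvd, hne0⟩, hodd⟩
        have hq : d * (K * e / d) = K * e := Nat.mul_div_cancel' hdvd
        have hKd : K ∣ d :=
          Nat.Coprime.dvd_of_dvd_mul_right (hcopK _ hodd) (Dvd.intro _ hq.symm)
        obtain ⟨f, rfl⟩ := hKd
        refine ⟨f, ⟨?_, by omega⟩, rfl⟩
        rwa [Nat.mul_dvd_mul_iff_left hKpos] at hdvd
      · rintro ⟨f, ⟨hfe, he0⟩, rfl⟩
        refine ⟨⟨Nat.mul_dvd_mul_left K hfe, by positivity⟩, ?_⟩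
        rw [Nat.mul_div_mul_left _ _ hKpos]
        exact hodde.of_dvd_nat (Nat.div_dvd_of_dvd hfe)
    rw [himg, Finset.sum_image
      (fun x _ y _ h => Nat.eq_of_mul_eq_mul_left hKpos h)] at hA
    have hcast := congrArg (fun x : ℕ => (x : ℚ)) hA
    push_cast at hcast
    exact hcast.symm
  have hinv := (ArithmeticFunction.sum_eq_iff_sum_mul_moebius_eq_on {x | x ∣ n}
      (fun a b hab hb => hab.trans hb)
      (f := fun f => (Pcnt (K * f) : ℚ))
      (g := fun e => (2 : ℚ) ^ (K * e - 1))).mp key n (by omega) (dvd_refl n)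
  rw [Nat.sum_divisorsAntidiagonal
      (f := fun x y => ((ArithmeticFunction.moebius x : ℤ) : ℚ) * (2 : ℚ) ^ (K * y - 1))]
    at hinv
  rw [hKn] at hinv
  rw [hdivs, ← hinv, Finset.mul_sum]
  rw [Finset.sum_congr rfl (fun d hd => ?_)]
  rw [Nat.mem_divisors] at hd
  have hd1 : 1 ≤ d := by
    rcases Nat.eq_zero_or_pos d with h0 | h1
    · subst h0; simp only [Nat.zero_dvd] at hd; omega
    · exact h1
  have hq1 : 1 ≤ n / d := Nat.div_pos (Nat.le_of_dvd (by omega) hd.1) hd1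
  have hmd : m / d = K * (n / d) := by
    rw [← hKn, Nat.mul_div_assoc K hd.1]
  have hKq : 1 ≤ K * (n / d) := Nat.one_le_iff_ne_zero.mpr (by positivity)
  rw [hmd]
  obtain ⟨t, ht⟩ : ∃ t, K * (n / d) = t + 1 := ⟨K * (n / d) - 1, by omega⟩
  rw [ht]
  simp only [Nat.add_sub_cancel]
  rw [pow_succ]
  ring
end

section
/- For n ≥ 3 and k ≥ 2, the number of pairs (z', M) where z' = z'₁…z'_{n−1} is a word over {0,…,j−1} for some 1 ≤ j ≤ k−1 with z'_{[n−2c, n−c−1]} = z'_{[n−c, n−1]} a primitive word of length c, and M is a multiset of size k−j from {2,…,c}, summed appropriately, equals Σ_{j=1}^{k−1} C(c+k−j−2, k−j) · j^{n−2c−1} · ψ_j(c), where ψ_j(c) is the number of primitive words of length c over j letters. -/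
lemma card_Z (j m c : ℕ) :
    Nat.card {z : List (Fin j) // z.length = m + 2 * c ∧
        (z.drop m).take c = z.drop (m + c) ∧ Primitive (z.drop (m + c))} =
      j ^ m * Nat.card {w : List (Fin j) // w.length = c ∧ Primitive w} := by
  have e : {z : List (Fin j) // z.length = m + 2 * c ∧
        (z.drop m).take c = z.drop (m + c) ∧ Primitive (z.drop (m + c))} ≃
      {u : List (Fin j) // u.length = m} × {w : List (Fin j) // w.length = c ∧ Primitive w} := by
    refine ⟨fun z => (⟨z.1.take m, ?_⟩, ⟨z.1.drop (m + c), ?_, z.2.2.2⟩),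
      fun p => ⟨p.1.1 ++ (p.2.1 ++ p.2.1), ?_, ?_, ?_⟩, ?_, ?_⟩
    · simp [z.2.1]
    · simp [z.2.1]; omega
    · simp [p.1.2, p.2.2.1]; ring
    · rw [List.drop_left' p.1.2, ← List.drop_drop, List.drop_left' p.1.2,
        List.take_left' p.2.2.1, List.drop_left' p.2.2.1]
    · rw [← List.drop_drop, List.drop_left' p.1.2, List.drop_left' p.2.2.1]
      exact p.2.2.2
    · rintro ⟨z, hz, heq, hp⟩
      ext1
      simp only
      have h1 : z.drop (m + c) = (z.drop m).drop c := by rw [List.drop_drop]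
      conv_rhs => rw [← List.take_append_drop m z]
      congr 1
      rw [h1] at heq ⊢
      conv_rhs => rw [← List.take_append_drop c (z.drop m)]
      rw [heq]
    · rintro ⟨⟨u, hu⟩, ⟨w, hw, hp⟩⟩
      refine Prod.ext (Subtype.ext ?_) (Subtype.ext ?_)
      · exact List.take_left' hu
      · show List.drop (m + c) (u ++ (w ++ w)) = w
        rw [← List.drop_drop, List.drop_left' hu, List.drop_left' hw]
  rw [Nat.card_congr e, Nat.card_prod]
  congr 1
  have : Nat.card (List.Vector (Fin j) m) = j ^ m := by
    simp [Nat.card_eq_fintype_card]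
  exact this

lemma card_Sym_Icc (c r : ℕ) (hc1 : 1 ≤ c) (hr : 1 ≤ r) :
    Nat.card (Sym {x : ℕ // x ∈ Finset.Icc 2 c} r) = (c + r - 2).choose r := by
  rw [Nat.card_eq_fintype_card, Sym.card_sym_eq_choose]
  congr 1
  rw [Fintype.card_coe, Nat.card_Icc]
  omega

/-- For `n ≥ 3`, `k ≥ 2` and odd `c` with `1 ≤ c ≤ ⌊(n-1)/2⌋`, the number of pairs
`(z', M)` — where, for some `1 ≤ j ≤ k-1`, `z'` is a word of length `n-1` over a `j`-letter
alphabet whose factor at positions `n-2c,…,n-c-1` equals its factor at positions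
`n-c,…,n-1`, this common word of length `c` being primitive, and `M` is a multiset of
`{2,…,c}` of size `k-j` — equals
`∑_{j=1}^{k-1} C(c+k-j-2, k-j) · j^{n-2c-1} · ψ_j(c)`,
where `ψ_j(c)` is the number of primitive words of length `c` over `j` letters. -/
theorem stmt8 (n k c : ℕ) (hn : 3 ≤ n) (hk : 2 ≤ k) (hodd : Odd c) (hc1 : 1 ≤ c)
    (hc : c ≤ (n - 1) / 2) :
    (∑ j ∈ Finset.Icc 1 (k - 1),
        Nat.card {z : List (Fin j) // z.length = n - 1 ∧
            (z.drop (n - 2 * c - 1)).take c = z.drop (n - c - 1) ∧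
            Primitive (z.drop (n - c - 1))} *
          Nat.card (Sym {x : ℕ // x ∈ Finset.Icc 2 c} (k - j))) =
      ∑ j ∈ Finset.Icc 1 (k - 1),
        (c + k - j - 2).choose (k - j) * j ^ (n - 2 * c - 1) *
          Nat.card {w : List (Fin j) // w.length = c ∧ Primitive w} := by
  refine Finset.sum_congr rfl fun j hj => ?_
  rw [Finset.mem_Icc] at hj
  have h1 : n - 1 = (n - 2 * c - 1) + 2 * c := by omega
  have h2 : n - c - 1 = (n - 2 * c - 1) + c := by omega
  rw [h1, h2, card_Z, card_Sym_Icc c (k - j) hc1 (by omega)]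
  have h3 : c + (k - j) - 2 = c + k - j - 2 := by omega
  rw [h3]; ring
end

section
/- Let d be a finite word with ‖d‖ odd (where ‖d‖ counts letters t of d with σ_t = −), and suppose an infinite word w satisfies d² w' ≺ w' ≺ d w' for some infinite word w' under the signed order. Then no such w' exists; i.e., there is no infinite word v with d²v ≺ v ≺ dv. -/
/-- The signed order on infinite `k`-ary words determined by the signature `neg`
(`neg t = true` means `σ_t = -`): `v ≺ w` iff at the first index `j` where they differ,
`v j < w j` when the number of earlier letters with negative sign is even,
and `v j > w j` when it is odd. -/
def sLess {k : ℕ} (neg : Fin k → Bool) (v w : ℕ → Fin k) : Prop :=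
  ∃ j, (∀ i < j, v i = w i) ∧
    (if ((Finset.range j).filter (fun i => neg (v i) = true)).card % 2 = 0
      then v j < w j else w j < v j)

/-- The periodic infinite word `d^∞` with period a nonempty finite word `d`. -/
def periodic {k : ℕ} (d : List (Fin k)) (hd : 0 < d.length) : ℕ → Fin k :=
  fun n => d.get ⟨n % d.length, Nat.mod_lt _ hd⟩

/-- The infinite word obtained by prepending the finite word `d` to the infinite word `v`. -/
def prepend {k : ℕ} (d : List (Fin k)) (v : ℕ → Fin k) : ℕ → Fin k :=
  fun n => if h : n < d.length then d.get ⟨n, h⟩ else v (n - d.length)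

/-- If `‖d‖` (the number of letters of `d` with negative sign) is odd, then there is no
infinite word `v` with `d²v ≺ v ≺ dv` under the signed order. -/
theorem stmt14 (k : ℕ) (neg : Fin k → Bool) (d : List (Fin k))
    (hodd : Odd (d.countP (fun t => neg t))) :
    ¬ ∃ v : ℕ → Fin k,
        sLess neg (prepend (d ++ d) v) v ∧ sLess neg v (prepend d v) := by
  rintro ⟨v, ⟨j1, h1eq, h1lt⟩, ⟨j2, h2eq, h2lt⟩⟩
  rcases Nat.eq_zero_or_pos d.length with hd0 | hd
  · rw [List.length_eq_zero_iff] at hd0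
    subst hd0
    simp [Nat.odd_iff] at hodd
  set L := d.length with hL
  set D := periodic d hd with hD
  -- periodicity
  have hDper : ∀ i, L ≤ i → D i = D (i - L) := by
    intro i hi
    simp only [hD, periodic]
    congr 1
    exact Fin.ext (Nat.mod_eq_sub_mod hi)
  -- value of D below L
  have hDlt : ∀ i (h : i < L), D i = d.get ⟨i, h⟩ := by
    intro i h
    simp only [hD, periodic]
    congr 1
    exact Fin.ext (Nat.mod_eq_of_lt h)
  -- v agrees with D below j2
  have hv2 : ∀ i, i < j2 → v i = D i := by
    intro i
    induction i using Nat.strong_induction_on with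
    | _ i ih =>
      intro hi
      rw [h2eq i hi]
      by_cases h : i < L
      · simp only [prepend]
        rw [dif_pos h, hDlt i h]
      · push_neg at h
        simp only [prepend]
        rw [dif_neg (by omega)]
        rw [ih (i - L) (by omega) (by omega), hDper i h]
  -- v agrees with D below j1
  have hv1 : ∀ i, i < j1 → v i = D i := by
    intro i
    induction i using Nat.strong_induction_on with
    | _ i ih =>
      intro hi
      rw [← h1eq i hi]
      simp only [prepend, List.length_append]
      by_cases h : i < L + L
      · rw [dif_pos (by omega)]
        rcases Nat.lt_or_ge i L with h' | h'
        · rw [hDlt i h']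
          simp only [List.get_eq_getElem]
          exact List.getElem_append_left h'
        · rw [hDper i h', hDlt (i - L) (by omega)]
          have : (d ++ d).get ⟨i, by simpa using h⟩ = d[i - L] :=
            List.getElem_append_right h'
          rw [this]
          simp only [List.get_eq_getElem]
      · rw [dif_neg (by omega)]
        rw [ih (i - (L + L)) (by omega) (by omega)]
        rw [hDper i (by omega), hDper (i - L) (by omega)]
        congr 1
        omega
  -- value of the prepended words at the difference index
  have h2val : prepend d v j2 = D j2 := by
    by_cases h : j2 < L
    · simp only [prepend]
      rw [dif_pos h, hDlt j2 h]
    · push_neg at h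
      simp only [prepend]
      rw [dif_neg (by omega)]
      rw [hv2 (j2 - L) (by omega), hDper j2 h]
  have h1val : prepend (d ++ d) v j1 = D j1 := by
    simp only [prepend, List.length_append]
    by_cases h : j1 < L + L
    · rw [dif_pos (by omega)]
      rcases Nat.lt_or_ge j1 L with h' | h'
      · rw [hDlt j1 h']
        simp only [List.get_eq_getElem]
        exact List.getElem_append_left h'
      · rw [hDper j1 h', hDlt (j1 - L) (by omega)]
        have : (d ++ d).get ⟨j1, by simpa using h⟩ = d[j1 - L] :=
          List.getElem_append_right h'
        rw [this]
        simp only [List.get_eq_getElem]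
    · rw [dif_neg (by omega)]
      rw [hv1 (j1 - (L + L)) (by omega)]
      rw [hDper j1 (by omega), hDper (j1 - L) (by omega)]
      congr 1
      omega
  rw [h1val] at h1lt
  rw [h2val] at h2lt
  -- at the difference indices, v differs from D
  have hne1 : v j1 ≠ D j1 := by
    intro h
    rw [h] at h1lt
    split_ifs at h1lt <;> exact lt_irrefl _ h1lt
  have hne2 : v j2 ≠ D j2 := by
    intro h
    rw [h] at h2lt
    split_ifs at h2lt <;> exact lt_irrefl _ h2lt
  -- hence j1 = j2
  have hj : j1 = j2 := by
    rcases lt_trichotomy j1 j2 with h | h | h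
    · exact absurd (hv2 j1 h) hne1
    · exact h
    · exact absurd (hv1 j2 h) hne2
  subst hj
  -- the two filter counts coincide
  have hcard : ((Finset.range j1).filter
        (fun i => neg (prepend (d ++ d) v i) = true)).card
      = ((Finset.range j1).filter (fun i => neg (v i) = true)).card := by
    congr 1
    apply Finset.filter_congr
    intro i hi
    rw [h1eq i (Finset.mem_range.mp hi)]
  rw [hcard] at h1lt
  split_ifs at h1lt h2lt
  · exact lt_asymm h1lt h2lt
  · exact lt_asymm h1lt h2lt
end

section
/- Let d be a finite word with ‖d‖ even (the number of letters t of d with σ_t = − is even). If an infinite word v satisfies v ≻ dv under the signed order, then v ≻ d^j v for all j ≥ 1, and hence v ≻ d^∞. -/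
section AuxStmt17

variable {k : ℕ}

lemma prepend_cons (t : Fin k) (d : List (Fin k)) (a : ℕ → Fin k) (i : ℕ) :
    prepend (t :: d) a (i + 1) = prepend d a i := by
  simp only [prepend, List.length_cons]
  by_cases hc : i < d.length
  · rw [dif_pos (by omega), dif_pos hc]
    simp
  · rw [dif_neg (by omega), dif_neg hc]
    congr 1
    omega

lemma prepend_lt (d : List (Fin k)) (a : ℕ → Fin k) (i : ℕ) (h : i < d.length) :
    prepend d a i = d.get ⟨i, h⟩ := dif_pos h

lemma prepend_add (d : List (Fin k)) (a : ℕ → Fin k) (i : ℕ) :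
    prepend d a (d.length + i) = a i := by
  simp only [prepend]
  rw [dif_neg (by omega)]
  congr 1
  omega

lemma sum_prefix (neg : Fin k → Bool) (d : List (Fin k)) (a : ℕ → Fin k) :
    (∑ i ∈ Finset.range d.length, (if neg (prepend d a i) = true then 1 else 0))
      = d.countP (fun t => neg t) := by
  induction d generalizing a with
  | nil => simp
  | cons t d ih =>
    rw [List.length_cons, Finset.sum_range_succ']
    simp only [prepend_cons]
    rw [ih]
    have h0 : prepend (t :: d) a 0 = t := by rw [prepend_lt _ _ _ (by simp)]; rfl
    rw [h0, List.countP_cons]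

lemma sum_shift (neg : Fin k → Bool) (d : List (Fin k)) (a : ℕ → Fin k) (j : ℕ) :
    (∑ i ∈ Finset.range (d.length + j), (if neg (prepend d a i) = true then 1 else 0))
      = d.countP (fun t => neg t)
        + ∑ i ∈ Finset.range j, (if neg (a i) = true then 1 else 0) := by
  rw [Finset.sum_range_add]
  congr 1
  · exact sum_prefix neg d a
  · exact Finset.sum_congr rfl fun i _ => by rw [prepend_add]

lemma sLess_prepend (neg : Fin k → Bool) (d : List (Fin k))
    (heven : Even (d.countP (fun t => neg t))) (a b : ℕ → Fin k)
    (h : sLess neg a b) : sLess neg (prepend d a) (prepend d b) := by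
  obtain ⟨j, hpre, hj⟩ := h
  refine ⟨d.length + j, ?_, ?_⟩
  · intro i hi
    by_cases hc : i < d.length
    · rw [prepend_lt _ _ _ hc, prepend_lt _ _ _ hc]
    · obtain ⟨i', rfl⟩ : ∃ i', i = d.length + i' := ⟨i - d.length, by omega⟩
      rw [prepend_add, prepend_add]
      exact hpre i' (by omega)
  · have hcard : ((Finset.range (d.length + j)).filter
        (fun i => neg (prepend d a i) = true)).card % 2
        = ((Finset.range j).filter (fun i => neg (a i) = true)).card % 2 := by
      rw [Finset.card_filter, Finset.card_filter, sum_shift]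
      obtain ⟨c, hc⟩ := heven
      omega
    rw [hcard, prepend_add, prepend_add]
    exact hj

lemma sLess_trans (neg : Fin k → Bool) (a b c : ℕ → Fin k)
    (hab : sLess neg a b) (hbc : sLess neg b c) : sLess neg a c := by
  obtain ⟨j1, h1, hj1⟩ := hab
  obtain ⟨j2, h2, hj2⟩ := hbc
  rcases lt_trichotomy j1 j2 with hlt | heq | hgt
  · refine ⟨j1, fun i hi => (h1 i hi).trans (h2 i (by omega)), ?_⟩
    rw [← h2 j1 hlt]
    exact hj1
  · subst heq
    refine ⟨j1, fun i hi => (h1 i hi).trans (h2 i hi), ?_⟩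
    have ecard : (Finset.range j1).filter (fun i => neg (b i) = true)
        = (Finset.range j1).filter (fun i => neg (a i) = true) :=
      Finset.filter_congr fun i hi => by
        rw [h1 i (Finset.mem_range.mp hi)]
    rw [ecard] at hj2
    split_ifs at hj1 hj2 ⊢ with hcond
    · exact hj1.trans hj2
    · exact hj2.trans hj1
  · refine ⟨j2, fun i hi => (h1 i (by omega)).trans (h2 i hi), ?_⟩
    have ecard : (Finset.range j2).filter (fun i => neg (b i) = true)
        = (Finset.range j2).filter (fun i => neg (a i) = true) :=
      Finset.filter_congr fun i hi => by
        rw [h1 i (by have := Finset.mem_range.mp hi; omega)]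
    rw [ecard] at hj2
    rw [h1 j2 hgt]
    exact hj2

lemma sLess_irrefl (neg : Fin k → Bool) (a : ℕ → Fin k) : ¬ sLess neg a a := by
  rintro ⟨j, -, hj⟩
  split_ifs at hj <;> exact lt_irrefl _ hj

lemma prepend_append (a b : List (Fin k)) (v : ℕ → Fin k) :
    prepend (a ++ b) v = prepend a (prepend b v) := by
  induction a with
  | nil => funext n; simp [prepend]
  | cons t a ih =>
    funext n
    cases n with
    | zero => simp [prepend]
    | succ n => rw [List.cons_append, prepend_cons, prepend_cons, ih]

lemma wpow_one_s17 (d : List (Fin k)) : wpow d 1 = d := by simp [wpow]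

lemma wpow_succ_s17 (d : List (Fin k)) (j : ℕ) : wpow d (j + 1) = d ++ wpow d j := by
  simp [wpow, List.replicate_succ]

lemma wpow_length (d : List (Fin k)) (j : ℕ) : (wpow d j).length = j * d.length := by
  simp [wpow, mul_comm]

lemma prepend_periodic (d : List (Fin k)) (hd : 0 < d.length) :
    prepend d (periodic d hd) = periodic d hd := by
  funext n
  by_cases h : n < d.length
  · rw [prepend_lt _ _ _ h]
    simp [periodic, Nat.mod_eq_of_lt h]
  · have e : n % d.length = (n - d.length) % d.length :=
      Nat.mod_eq_sub_mod (le_of_not_gt h)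
    simp only [prepend, dif_neg h, periodic]
    congr 1
    exact Fin.ext e.symm

lemma prepend_wpow_periodic (d : List (Fin k)) (hd : 0 < d.length) (j : ℕ) :
    prepend (wpow d j) (periodic d hd) = periodic d hd := by
  induction j with
  | zero => funext n; simp [wpow, prepend]
  | succ j ih => rw [wpow_succ_s17, prepend_append, ih, prepend_periodic]

lemma prepend_wpow_eq_periodic (d : List (Fin k)) (hd : 0 < d.length) (j : ℕ)
    (v : ℕ → Fin k) (n : ℕ) (h : n < (wpow d j).length) :
    prepend (wpow d j) v n = periodic d hd n := by
  rw [prepend_lt _ _ _ h, ← prepend_wpow_periodic d hd j, prepend_lt _ _ _ h]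


/-- Let `d` be a nonempty finite word with `‖d‖` even. If `v ≻ dv` under the signed order,
then `v ≻ d^j v` for all `j ≥ 1`, and hence `v ≻ d^∞`. -/
theorem stmt17 (k : ℕ) (neg : Fin k → Bool) (d : List (Fin k)) (hd : 0 < d.length)
    (heven : Even (d.countP (fun t => neg t))) (v : ℕ → Fin k)
    (h : sLess neg (prepend d v) v) :
    (∀ j, 1 ≤ j → sLess neg (prepend (wpow d j) v) v) ∧
      sLess neg (periodic d hd) v := by
  have hpart1 : ∀ j, 1 ≤ j → sLess neg (prepend (wpow d j) v) v := by
    intro j hj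
    induction j with
    | zero => omega
    | succ j ih =>
      rcases Nat.eq_zero_or_pos j with h0 | h1
      · subst h0; rw [wpow_one_s17]; exact h
      · have hstep := sLess_prepend neg d heven _ _ (ih h1)
        rw [← prepend_append, ← wpow_succ_s17] at hstep
        exact sLess_trans neg _ _ _ hstep h
  refine ⟨hpart1, ?_⟩
  by_cases hv : ∀ n, v n = periodic d hd n
  · exfalso
    have hv' : v = periodic d hd := funext hv
    have hfix : prepend d v = v := by rw [hv', prepend_periodic]
    rw [hfix] at h
    exact sLess_irrefl neg v h
  · push_neg at hv
    classical
    have hn : v (Nat.find hv) ≠ periodic d hd (Nat.find hv) := Nat.find_spec hv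
    set n := Nat.find hv with hn_def
    have hmin : ∀ i < n, v i = periodic d hd i := fun i hi =>
      not_ne_iff.mp (Nat.find_min hv hi)
    obtain ⟨j1, hpre, hj1⟩ := hpart1 (n + 1) (by omega)
    set w := prepend (wpow d (n + 1)) v with hw_def
    have hw : ∀ i ≤ n, w i = periodic d hd i := by
      intro i hi
      apply prepend_wpow_eq_periodic
      rw [wpow_length]
      have : n + 1 ≤ (n + 1) * d.length := Nat.le_mul_of_pos_right _ hd
      omega
    have hne : w j1 ≠ v j1 := by
      split_ifs at hj1
      · exact ne_of_lt hj1
      · exact (ne_of_lt hj1).symm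
    have hj1n : j1 = n := by
      rcases lt_trichotomy j1 n with hlt | heq | hgt
      · exact absurd ((hw j1 (le_of_lt hlt)).trans (hmin j1 hlt).symm) hne
      · exact heq
      · exact absurd ((hpre n hgt).symm.trans (hw n le_rfl)) hn
    subst hj1n
    refine ⟨n, fun i hi => (hmin i hi).symm, ?_⟩
    have ecard : (Finset.range n).filter (fun i => neg (periodic d hd i) = true)
        = (Finset.range n).filter (fun i => neg (w i) = true) :=
      Finset.filter_congr fun i hi => by
        rw [hw i (le_of_lt (Finset.mem_range.mp hi))]
    rw [ecard, ← hw n le_rfl]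
    exact hj1


end AuxStmt17
end
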